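/- arXiv:math/0403498 — 2 statements merged into one kernel-verified Lean document; each statement's English description precedes it below -/
import Mathlib

section
/- A direct product of finite-dimensional simple algebras over a field K is a self-injective ring, i.e., it is injective as a module over itself. -/
open LinearMap

/-- A finite-dimensional simple algebra over a field is a semisimple ring. -/
theorem aux_isSemisimpleRing (K : Type*) [Field K] (S : Type*) [Ring S] [Algebra K S]
    [FiniteDimensional K S] [IsSimpleRing S] : IsSemisimpleRing S := by
  have hart : IsArtinian S S := isArtinian_of_tower K inferInstance
  have hatomic : IsAtomic (Submodule S S) :=
    isAtomic_of_orderBot_wellFounded_lt hart.wf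
  obtain ⟨m, hm⟩ : ∃ m : Submodule S S, IsAtom m := by
    rcases hatomic.eq_bot_or_exists_atom_le (⊤ : Submodule S S) with h | ⟨a, ha, -⟩
    · exact absurd h (by simp)
    · exact ⟨a, ha⟩
  have hsimple : IsSimpleModule S m := (isSimpleModule_iff_isAtom).mpr hm
  -- the family of right translates of m
  set p : S → Submodule S S := fun r => m.map (toSpanSingleton S S r) with hp
  have hps : ∀ r, IsSemisimpleModule S (p r) := by
    intro r
    have : p r = LinearMap.range ((toSpanSingleton S S r).comp m.subtype) := by
      rw [LinearMap.range_comp, Submodule.range_subtype]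
    rw [this]
    exact IsSemisimpleModule.range _
  -- the sup of the translates is a two-sided ideal
  set T : Submodule S S := ⨆ r, p r with hT
  have hmT : m ≤ T := by
    have h1 : p 1 = m := by
      ext x
      simp [hp, Submodule.mem_map, toSpanSingleton_apply, smul_eq_mul]
    calc m = p 1 := h1.symm
    _ ≤ T := le_iSup p 1
  have hTr : ∀ x ∈ T, ∀ r : S, x * r ∈ T := by
    intro x hx r
    have : Submodule.map (toSpanSingleton S S r) T ≤ T := by
      rw [hT, Submodule.map_iSup]
      refine iSup_le fun s => ?_
      have : (p s).map (toSpanSingleton S S r) = p (s * r) := by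
        rw [hp]
        dsimp only
        rw [← Submodule.map_comp]
        congr 1
        refine LinearMap.ext fun x => ?_
        simp [toSpanSingleton_apply, smul_eq_mul, mul_assoc]
      rw [this]
      exact le_iSup p (s * r)
    exact this ⟨x, hx, by simp [toSpanSingleton_apply, smul_eq_mul]⟩
  have hTtop : T = ⊤ := by
    set Itwo : TwoSidedIdeal S := TwoSidedIdeal.mk' T (T.zero_mem)
      (fun ha hb => T.add_mem ha hb) (fun ha => T.neg_mem ha)
      (fun {a b} hb => T.smul_mem a hb) (fun {a b} ha => hTr _ ha _) with hItwo
    have hmem : ∀ x : S, x ∈ Itwo ↔ x ∈ T := fun x =>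
      TwoSidedIdeal.mem_mk' _ _ _ _ _ _ x
    rcases IsSimpleRing.simple.eq_bot_or_eq_top Itwo with h | h
    · exfalso
      apply hm.1
      refine le_antisymm (fun x hx => ?_) bot_le
      have : x ∈ Itwo := (hmem x).mpr (hmT hx)
      rw [h] at this
      simpa using this
    · refine le_antisymm le_top fun x _ => ?_
      have : x ∈ Itwo := by rw [h]; trivial
      exact (hmem x).mp this
  exact isSemisimpleModule_of_isSemisimpleModule_submodule' hps hTtop

/-- A direct product of finite-dimensional simple algebras over a field `K` is a
self-injective ring: it is injective as a module over itself. -/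
theorem stmt_0 (K : Type*) [Field K] (I : Type*) (A : I → Type*)
    [∀ i, Ring (A i)] [∀ i, Algebra K (A i)]
    [∀ i, FiniteDimensional K (A i)] [∀ i, IsSimpleRing (A i)] :
    Module.Injective (∀ i, A i) (∀ i, A i) := by
  classical
  have hss : ∀ i, IsSemisimpleRing (A i) := fun i => aux_isSemisimpleRing K (A i)
  set R := ∀ i, A i with hR
  apply Module.Baer.injective
  intro J f
  -- key: the i-th component of f x depends only on the i-th component of x
  have key : ∀ (x : R) (hx : x ∈ J) (i : I), x i = 0 → f ⟨x, hx⟩ i = 0 := by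
    intro x hx i hxi
    set e : R := Pi.single i (1 : A i) with he
    have hex : e • x = 0 := by
      funext j
      show e j * x j = 0
      by_cases h : j = i
      · subst h; simp [he, hxi]
      · simp [he, Pi.single_eq_of_ne h]
    have h1 : e • f ⟨x, hx⟩ = 0 := by
      rw [← map_smul]
      have : e • (⟨x, hx⟩ : J) = 0 := Subtype.ext (by simpa [smul_eq_mul] using hex)
      rw [this, map_zero]
    have h2 := congrFun h1 i
    have h3 : e i * f ⟨x, hx⟩ i = 0 := h2
    simpa [he] using h3
  -- for each i, f restricted to the i-th component is right multiplication by some m i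
  have main : ∀ i : I, ∃ mi : A i, ∀ (x : R) (hx : x ∈ J), f ⟨x, hx⟩ i = x i * mi := by
    intro i
    -- the image of J in A i, a left ideal
    set Si : Submodule (A i) (A i) :=
      { carrier := (fun x : R => x i) '' J
        add_mem' := by
          rintro a b ⟨x, hx, rfl⟩ ⟨y, hy, rfl⟩
          exact ⟨x + y, J.add_mem hx hy, rfl⟩
        zero_mem' := ⟨0, J.zero_mem, rfl⟩
        smul_mem' := by
          rintro c a ⟨x, hx, rfl⟩
          refine ⟨Pi.single i c * x, J.mul_mem_left _ hx, ?_⟩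
          show (Pi.single i c * x) i = c • x i
          rw [Pi.mul_apply, Pi.single_eq_same, smul_eq_mul] } with hSi
    have := hss i
    obtain ⟨T, hT⟩ := exists_isCompl Si
    obtain ⟨s, hs, t, ht, hst⟩ := Submodule.mem_sup.1
      (show (1 : A i) ∈ Si ⊔ T by rw [hT.sup_eq_top]; trivial)
    -- s is a right identity on Si
    have hs_id : ∀ a ∈ Si, a * s = a := by
      intro a ha
      have hdecomp : a * s + a * t = a := by
        rw [← mul_add, hst, mul_one]
      have hat_T : a * t ∈ T := T.smul_mem a ht
      have has_S : a * s ∈ Si := Si.smul_mem a hs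
      have hat_S : a * t ∈ Si := by
        have h5 : a * t = a - a * s := eq_sub_of_add_eq' hdecomp
        rw [h5]; exact Si.sub_mem ha has_S
      have h6 : a * t = 0 := Submodule.disjoint_def.mp hT.disjoint _ hat_S hat_T
      rw [h6, add_zero] at hdecomp
      exact hdecomp
    obtain ⟨x₀, hx₀, hx₀i⟩ := hs
    refine ⟨f ⟨x₀, hx₀⟩ i, fun x hx => ?_⟩
    have hxx₀ : x * x₀ ∈ J := J.mul_mem_left x hx₀
    have h2 : f ⟨x * x₀, hxx₀⟩ = x • f ⟨x₀, hx₀⟩ := by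
      rw [← map_smul]
      congr 1
    have h3 : f ⟨x, hx⟩ i = f ⟨x * x₀, hxx₀⟩ i := by
      have hd : (x - x * x₀) i = 0 := by
        have hxi : (x * x₀) i = x i * x₀ i := rfl
        have hx₀i' : x₀ i = s := hx₀i
        have : x i * x₀ i = x i := by
          rw [hx₀i']
          exact hs_id (x i) ⟨x, hx, rfl⟩
        show x i - (x * x₀) i = 0
        rw [hxi, this, sub_self]
      have hk := key (x - x * x₀) (J.sub_mem hx hxx₀) i hd
      have : f ⟨x - x * x₀, J.sub_mem hx hxx₀⟩
          = f ⟨x, hx⟩ - f ⟨x * x₀, hxx₀⟩ := by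
        rw [← map_sub]
        congr 1
      rw [this] at hk
      exact sub_eq_zero.mp hk
    rw [h3, h2]
    rfl
  choose mv hmv using main
  refine ⟨LinearMap.toSpanSingleton R R mv, fun x hx => ?_⟩
  funext i
  show (x * mv) i = f ⟨x, hx⟩ i
  rw [hmv i x hx]
  rfl
end

section
/- For a Lie algebra g over a field with basis x_1,…,x_d, the following identity holds in the top exterior power minus one contribution: ∑_{i<j} (-1)^{i+j} [x_i,x_j] ∧ x_1 ∧ … ∧ x̂_i ∧ … ∧ x̂_j ∧ … ∧ x_d = ∑_s (-1)^s tr(ad(x_s)) · x_1 ∧ … ∧ x̂_s ∧ … ∧ x_d in Λ^{d-1} g. -/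
/-!
Expand `⁅x_i, x_j⁆ = ∑_k c_{ij}^k x_k`. Wedged with the remaining basis vectors, only the terms
`k = i` and `k = j` survive, and moving `x_i` (resp. `x_j`) into its slot costs the sign `(-1)^i`
(resp. `(-1)^(j-1)`). So the pair `(i, j)` contributes `c_{ij}^j` to the coefficient of `x̂_i` and
`c_{ji}^i` to that of `x̂_j`; summing over all pairs, the coefficient of `x̂_s` collects the
diagonal entries `c_{sk}^k` of `ad x_s`, i.e. its trace.
-/

open ExteriorAlgebra

theorem List.SortedLT.eq_filter_lt_append_cons_filter_gt {α : Type*} [LinearOrder α]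
    {l : List α} (hl : l.SortedLT) {a : α} (ha : a ∈ l) :
    l = l.filter (· < a) ++ a :: l.filter (a < ·) := by
  induction l with
  | nil => simp at ha
  | cons c l ih =>
    obtain ⟨hc, hl⟩ := List.pairwise_cons.mp hl.pairwise
    rcases List.mem_cons.mp ha with rfl | ha
    · have hlt : l.filter (· < a) = [] := List.filter_eq_nil_iff.mpr fun k hk => by
        simpa using (hc k hk).le
      have hgt : l.filter (a < ·) = l := List.filter_eq_self.mpr fun k hk => by simpa using hc k hk
      simp [hlt, hgt]
    · have hca : c < a := hc a ha
      simpa [hca, not_lt_of_gt hca] using ih hl.sortedLT ha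

theorem List.countP_finRange {d : ℕ} (p : Fin d → Prop) [DecidablePred p] :
    (List.finRange d).countP (fun k => decide (p k)) = (Finset.univ.filter p).card := by
  rw [← (List.nodup_finRange d).card_eq_countP, List.toFinset_finRange]

theorem Finset.sum_sum_ite_lt_add_swap {ι M : Type*} [Fintype ι] [LinearOrder ι]
    [AddCommMonoid M] (F : ι → ι → M) (hF : ∀ i, F i i = 0) :
    ∑ i, ∑ j, (if i < j then F i j + F j i else 0) = ∑ i, ∑ j, F i j := by
  have hsplit (i j : ι) : (if i < j then F i j else 0) + (if j < i then F i j else 0) = F i j := by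
    rcases lt_trichotomy i j with h | rfl | h
    · simp [h, h.not_gt]
    · simp [hF]
    · simp [h, h.not_gt]
  simp only [ite_add_zero, Finset.sum_add_distrib]
  rw [Finset.sum_comm (f := fun i j => if i < j then F j i else 0)]
  simp only [← Finset.sum_add_distrib, hsplit]

namespace ExteriorAlgebra

variable {R M α : Type*} [CommRing R] [AddCommGroup M] [Module R M]

theorem ι_mul_ι_anticomm (a b : M) : ι R a * ι R b = -(ι R b * ι R a) :=
  eq_neg_of_add_eq_zero_left (ι_add_mul_swap a b)

variable (f : α → M)

theorem ι_mul_prod_map_eq_zero_of_mem {a : α} {l : List α} (ha : a ∈ l) :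
    ι R (f a) * (l.map fun k => ι R (f k)).prod = 0 := by
  induction l with
  | nil => simp at ha
  | cons c l ih =>
    rw [List.map_cons, List.prod_cons, ← mul_assoc]
    rcases List.mem_cons.mp ha with rfl | ha
    · rw [ι_sq_zero, zero_mul]
    · rw [ι_mul_ι_anticomm, neg_mul, mul_assoc, ih ha, mul_zero, neg_zero]

theorem ι_mul_prod_map_append (a : α) (l₁ l₂ : List α) :
    ι R (f a) * ((l₁ ++ l₂).map fun k => ι R (f k)).prod =
      (-1 : R) ^ l₁.length • ((l₁ ++ a :: l₂).map fun k => ι R (f k)).prod := by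
  induction l₁ with
  | nil => simp
  | cons c l₁ ih =>
    simp only [List.cons_append, List.map_cons, List.prod_cons, List.length_cons]
    rw [← mul_assoc, ι_mul_ι_anticomm, neg_mul, mul_assoc, ih, mul_smul_comm, pow_succ, mul_smul,
      neg_one_smul, smul_neg]

theorem ι_mul_prod_map_filter {l l₁ l₂ : List α} {a : α} (hl : l = l₁ ++ a :: l₂)
    {p q : α → Bool} (hpa : p a = false) (hqa : q a = true) (hpq : ∀ k ∈ l₁ ++ l₂, p k = q k) :
    ι R (f a) * ((l.filter p).map fun k => ι R (f k)).prod =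
      (-1 : R) ^ l₁.countP p • ((l.filter q).map fun k => ι R (f k)).prod := by
  have h₁ : l₁.filter p = l₁.filter q := List.filter_congr fun k hk => hpq k (by simp [hk])
  have h₂ : l₂.filter p = l₂.filter q := List.filter_congr fun k hk => hpq k (by simp [hk])
  subst hl
  simp only [List.filter_append, List.filter_cons, hpa, hqa, h₁, h₂, if_true]
  rw [ι_mul_prod_map_append, List.countP_eq_length_filter, h₁]
  rfl

theorem ι_mul_prod_filter_ne_ne {d : ℕ} (b : Module.Basis (Fin d) R M) (y : M) {i j : Fin d}
    (hij : i < j) :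
    ι R y * (((List.finRange d).filter fun k => k ≠ i ∧ k ≠ j).map fun k => ι R (b k)).prod =
      ((-1) ^ (i : ℕ) * b.repr y i) •
          (((List.finRange d).filter fun k => k ≠ j).map fun k => ι R (b k)).prod -
        ((-1) ^ (j : ℕ) * b.repr y j) •
          (((List.finRange d).filter fun k => k ≠ i).map fun k => ι R (b k)).prod := by
  set P := (((List.finRange d).filter fun k => k ≠ i ∧ k ≠ j).map fun k => ι R (b k)).prod
  have hsplit (a : Fin d) := (List.sortedLT_finRange d).eq_filter_lt_append_cons_filter_gt
    (List.mem_finRange a)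
  have hi : ι R (b i) * P = (-1 : R) ^ (i : ℕ) •
      (((List.finRange d).filter fun k => k ≠ j).map fun k => ι R (b k)).prod := by
    rw [ι_mul_prod_map_filter b (hsplit i) (q := fun k => decide (k ≠ j)) (by simp)
      (by simpa using hij.ne) (by simp_all)]
    congr
    simp only [List.countP_filter, ← Bool.decide_and, List.countP_finRange]
    rw [← Fin.card_Iio i]
    congr 2
    ext k
    simp only [Finset.mem_filter, Finset.mem_univ, true_and, Finset.mem_Iio]
    grind
  have hj : ι R (b j) * P = -(-1 : R) ^ (j : ℕ) •
      (((List.finRange d).filter fun k => k ≠ i).map fun k => ι R (b k)).prod := by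
    rw [ι_mul_prod_map_filter b (hsplit j) (q := fun k => decide (k ≠ i)) (by simp)
      (by simpa using hij.ne') (by simp_all)]
    congr
    simp only [List.countP_filter, ← Bool.decide_and, List.countP_finRange]
    have hcount : ((Finset.Iio j).erase i).card + 1 = j := by
      rw [Finset.card_erase_add_one (by simpa using hij), Fin.card_Iio]
    rw [← hcount, pow_succ, mul_neg_one, neg_neg]
    congr 2
    ext k
    simp only [Finset.mem_filter, Finset.mem_univ, true_and, Finset.mem_erase, Finset.mem_Iio]
    grind
  have hothers (k : Fin d) (hk : k ≠ i ∧ k ≠ j) : ι R (b k) * P = 0 :=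
    ι_mul_prod_map_eq_zero_of_mem b (by simpa using hk)
  conv_lhs => rw [← b.sum_repr y, map_sum, Finset.sum_mul]
  simp only [map_smul, smul_mul_assoc]
  rw [Fintype.sum_eq_add i j hij.ne fun k hk => by rw [hothers k hk, smul_zero], hi, hj, smul_smul,
    smul_smul, mul_neg, neg_smul, mul_comm (b.repr y i), mul_comm (b.repr y j), sub_eq_add_neg]

end ExteriorAlgebra

theorem LinearMap.trace_eq_sum_repr {R M ι : Type*} [CommRing R] [AddCommGroup M] [Module R M]
    [Fintype ι] [DecidableEq ι] (b : Module.Basis ι R M) (f : M →ₗ[R] M) :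
    LinearMap.trace R M f = ∑ k, b.repr (f (b k)) k := by
  simp [LinearMap.trace_eq_matrix_trace R b, Matrix.trace, LinearMap.toMatrix_apply]

section

variable {R L : Type*} [CommRing R] [LieRing L] [LieAlgebra R L]

theorem neg_one_pow_smul_ι_lie_mul_prod {d : ℕ} (b : Module.Basis (Fin d) R L) {i j : Fin d}
    (hij : i < j) :
    (-1 : R) ^ ((i : ℕ) + j) •
        (ι R ⁅b i, b j⁆ *
          (((List.finRange d).filter fun k => k ≠ i ∧ k ≠ j).map fun k => ι R (b k)).prod) =
      ((-1) ^ ((i : ℕ) + 1) * b.repr ⁅b i, b j⁆ j) •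
          (((List.finRange d).filter fun k => k ≠ i).map fun k => ι R (b k)).prod +
        ((-1) ^ ((j : ℕ) + 1) * b.repr ⁅b j, b i⁆ i) •
          (((List.finRange d).filter fun k => k ≠ j).map fun k => ι R (b k)).prod := by
  rw [ι_mul_prod_filter_ne_ne b _ hij, ← lie_skew (b j) (b i), map_neg, Finsupp.neg_apply,
    smul_sub, smul_smul, smul_smul, sub_eq_neg_add, ← neg_smul]
  congr 2 <;> ring_nf <;> simp

end

/-- For a `d`-dimensional Lie algebra `g` over a field `L` with ordered basis
`x 0, …, x (d-1)` (`0`-based indexing, so the signs `(-1)^{i+j}` and `(-1)^{s+1}` below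
correspond to the `1`-based signs `(-1)^{i+j}` and `(-1)^{s}`), one has, in the exterior
algebra (the terms lie in the `(d-1)`-st exterior power):
`∑_{i<j} (-1)^{i+j} [x_i,x_j] ∧ x_1 ∧ … ∧ x̂_i ∧ … ∧ x̂_j ∧ … ∧ x_d
  = ∑_s (-1)^s tr(ad(x_s)) · x_1 ∧ … ∧ x̂_s ∧ … ∧ x_d`. -/
theorem stmt_2 (L : Type*) [Field L] (g : Type*) [LieRing g] [LieAlgebra L g]
    (d : ℕ) (b : Module.Basis (Fin d) L g) (x : Fin d → g) (hx : x = ⇑b) :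
    (∑ i : Fin d, ∑ j : Fin d,
      if i < j then
        ((-1 : L) ^ ((i : ℕ) + (j : ℕ))) •
          (ExteriorAlgebra.ι L ⁅x i, x j⁆ *
            (((List.finRange d).filter (fun k => k ≠ i ∧ k ≠ j)).map
              (fun k => ExteriorAlgebra.ι L (x k))).prod)
      else 0) =
    ∑ s : Fin d,
      ((-1 : L) ^ ((s : ℕ) + 1) * LinearMap.trace L g (LieAlgebra.ad L g (x s))) •
        (((List.finRange d).filter (fun k => k ≠ s)).map
          (fun k => ExteriorAlgebra.ι L (x k))).prod := by
  subst hx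
  let F (s k : Fin d) : ExteriorAlgebra L g := ((-1) ^ ((s : ℕ) + 1) * b.repr ⁅b s, b k⁆ k) •
    (((List.finRange d).filter fun k => k ≠ s).map fun k => ι L (b k)).prod
  calc _ = ∑ i, ∑ j, if i < j then F i j + F j i else 0 := by
        refine Finset.sum_congr rfl fun i _ => Finset.sum_congr rfl fun j _ => ?_
        split_ifs with hij
        exacts [neg_one_pow_smul_ι_lie_mul_prod b hij, rfl]
    _ = ∑ s, ∑ k, F s k := Finset.sum_sum_ite_lt_add_swap F fun s => by simp [F]
    _ = _ := by
        simp only [F, LinearMap.trace_eq_sum_repr b, LieAlgebra.ad_apply, Finset.mul_sum,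
          Finset.sum_smul]
end
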